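/- Fold lemma (simple-homotopy/homotopy equivalence version): if v and w are distinct vertices of a graph G with N(v) ⊆ N(w), then the independence complex Ind(G) is homotopy equivalent to Ind(G \ {w}). -/

import Mathlib

open Function Set

/-- A set of vertices of a simple graph is independent if its elements are
pairwise non-adjacent.  The independence complex `Ind G` is the simplicial
complex whose faces are exactly the independent sets. -/
def isIndepSet {V : Type*} (G : SimpleGraph V) (s : Set V) : Prop :=
  s.Pairwise fun a b => ¬ G.Adj a b

/-- Geometric realization of the subcomplex of the independence complex of `G`
consisting of the independent sets contained in `S` (so `S = univ` gives
`Ind G`, `S = {v}ᶜ` gives `Ind (G \ v)`, and `S = N[v]ᶜ` gives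
`Ind (G \ N[v])`): convex combinations of vertices whose support is a face. -/
def indRealizationIn {V : Type*} (G : SimpleGraph V) (S : Set V) : Set (V → ℝ) :=
  {f | (∀ v, 0 ≤ f v) ∧ (Function.support f).Finite ∧ Function.support f ⊆ S ∧
       isIndepSet G (Function.support f) ∧ ∑ᶠ v, f v = 1}

/-- Geometric realization of the independence complex `Ind G`. -/
def indRealization {V : Type*} (G : SimpleGraph V) : Set (V → ℝ) :=
  indRealizationIn G Set.univ

/-- The (unreduced) suspension of a topological space. -/
def Susp (X : Type*) [TopologicalSpace X] : Type _ :=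
  Quot (fun p q : X × unitInterval => (p.2 = 0 ∧ q.2 = 0) ∨ (p.2 = 1 ∧ q.2 = 1))

instance (X : Type*) [TopologicalSpace X] : TopologicalSpace (Susp X) :=
  inferInstanceAs (TopologicalSpace (Quot _))

/-- The wedge of two pointed topological spaces. -/
def WedgeAt (X Y : Type*) [TopologicalSpace X] [TopologicalSpace Y] (x₀ : X) (y₀ : Y) :
    Type _ :=
  Quot (fun p q : X ⊕ Y => p = Sum.inl x₀ ∧ q = Sum.inr y₀)

instance (X Y : Type*) [TopologicalSpace X] [TopologicalSpace Y] (x₀ : X) (y₀ : Y) :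
    TopologicalSpace (WedgeAt X Y x₀ y₀) :=
  inferInstanceAs (TopologicalSpace (Quot _))

/-- The sphere `S^{m-1}`, realized as the unit sphere of `ℝ^m`. -/
def sphere' (m : ℕ) : Set (EuclideanSpace ℝ (Fin m)) := Metric.sphere 0 1

/-- A wedge of two `m`-dimensional spheres: the two unit spheres of `ℝ^{m+1}`
centered at `±e₀`, which are tangent at the origin. -/
def sphereWedge (m : ℕ) : Set (EuclideanSpace ℝ (Fin (m + 1))) :=
  {x | dist x (EuclideanSpace.single (0 : Fin (m + 1)) (1 : ℝ)) = 1 ∨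
       dist x (-(EuclideanSpace.single (0 : Fin (m + 1)) (1 : ℝ))) = 1}

/-- The hexagonal line tiling graph `H_{1×1×n}`: two rows (row `j` carries the
vertices `v^{j+1}_1, …, v^{j+1}_{2n+1}`, column `i : Fin (2n+1)` being the
1-indexed vertex `v^{j+1}_{i+1}`), each row forming a path, together with the
rung edges `{v^1_{2t-1}, v^2_{2t-1}}`, i.e. rungs at even 0-indexed columns. -/
def hexRow (n : ℕ) : SimpleGraph (Fin 2 × Fin (2 * n + 1)) :=
  SimpleGraph.fromRel (fun p q =>
    (p.1 = q.1 ∧ (p.2 : ℕ) + 1 = (q.2 : ℕ)) ∨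
    (p.1 ≠ q.1 ∧ p.2 = q.2 ∧ (p.2 : ℕ) % 2 = 0))

/-- The last vertex `v^1_{2n+1}` of the top row of `H_{1×1×n}`. -/
def hexTop (n : ℕ) : Fin 2 × Fin (2 * n + 1) := (0, ⟨2 * n, by omega⟩)

/-- `X_n^{(1)} = H_{1×1×n} \ {v^1_{2n+1}}` : realization of its independence
complex, as the subcomplex of `Ind (H_{1×1×n})` of faces avoiding `v^1_{2n+1}`. -/
def Xn1 (n : ℕ) : Set (Fin 2 × Fin (2 * n + 1) → ℝ) :=
  indRealizationIn (hexRow n) ({hexTop n}ᶜ)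

/-- `X_n^{(2)} = H_{1×1×n} \ N[v^1_{2n+1}]` : realization of its independence
complex, as the subcomplex of `Ind (H_{1×1×n})` of faces avoiding `N[v^1_{2n+1}]`. -/
def Xn2 (n : ℕ) : Set (Fin 2 × Fin (2 * n + 1) → ℝ) :=
  indRealizationIn (hexRow n) ((insert (hexTop n) ((hexRow n).neighborSet (hexTop n)))ᶜ)

/-! Pushing the barycentric weight of `w` onto `v` maps `Ind G` into `Ind (G \ {w})` and fixes
the latter pointwise: a face `σ` containing `w` stays independent after adding `v`, since any
neighbour of `v` is a neighbour of `w ∈ σ`. The segment from a point to its image lies in the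
face `σ ∪ {v}`, so the straight-line homotopy deforms `Ind G` onto `Ind (G \ {w})`. -/

def ContinuousMap.HomotopyEquiv.ofSegmentRetraction {E : Type*} [AddCommGroup E]
    [TopologicalSpace E] [IsTopologicalAddGroup E] [Module ℝ E] [ContinuousSMul ℝ E]
    {X A : Set E} (hAX : A ⊆ X) (r : C(X, A)) (hr : ∀ a : A, (r (inclusion hAX a) : E) = a)
    (hseg : ∀ x : X, segment ℝ (x : E) (r x) ⊆ X) : ContinuousMap.HomotopyEquiv X A where
  toFun := r
  invFun := ⟨inclusion hAX, continuous_inclusion hAX⟩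
  left_inv := ⟨
    { toFun := fun p => ⟨AffineMap.lineMap (r p.2 : E) (p.2 : E) (p.1 : ℝ),
        hseg p.2 <| segment_symm ℝ (p.2 : E) (r p.2) ▸ lineMap_mem_segment ℝ _ _ p.1.2⟩
      continuous_toFun := by
        refine Continuous.subtype_mk ?_ _
        simp only [AffineMap.lineMap_apply_module]
        fun_prop
      map_zero_left := fun x => Subtype.ext <| by simp; rfl
      map_one_left := fun x => Subtype.ext <| by simp }⟩
  right_inv := by
    convert ContinuousMap.Homotopic.refl (ContinuousMap.id A)
    ext a : 2
    exact hr a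

section Fold

variable {V : Type*} {G : SimpleGraph V} {S : Set V} {v w : V} {c : ℝ} {f : V → ℝ}

theorem isIndepSet_insert_of_neighborSet_subset (h : G.neighborSet v ⊆ G.neighborSet w)
    {s : Set V} (hs : isIndepSet G s) (hw : w ∈ s) : isIndepSet G (insert v s) := by
  refine hs.insert fun b hb _ => ?_
  have hvb : ¬ G.Adj v b := fun hadj => hs hw hb (h hadj).ne (h hadj)
  exact ⟨hvb, fun hbv => hvb hbv.symm⟩

theorem indRealizationIn_mono {S T : Set V} (hST : S ⊆ T) :
    indRealizationIn G S ⊆ indRealizationIn G T :=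
  fun _ ⟨hpos, hfin, hS, hind, hsum⟩ => ⟨hpos, hfin, hS.trans hST, hind, hsum⟩

theorem apply_eq_zero_of_mem_indRealizationIn (hf : f ∈ indRealizationIn G S) {u : V}
    (hu : u ∉ S) : f u = 0 :=
  Function.notMem_support.mp fun hfu => hu (hf.2.2.1 hfu)

variable [DecidableEq V]

variable (v w) in
def transfer (c : ℝ) (f : V → ℝ) : V → ℝ :=
  f + Pi.single v c - Pi.single w c

variable (v w) in
theorem transfer_zero (f : V → ℝ) : transfer v w 0 f = f := by
  simp [transfer]

theorem transfer_nonneg (hf : ∀ u, 0 ≤ f u) (hc₀ : 0 ≤ c) (hc : c ≤ f w) (u : V) :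
    0 ≤ transfer v w c f u := by
  simp only [transfer, Pi.add_apply, Pi.sub_apply, Pi.single_apply]
  split_ifs <;> subst_vars <;> nlinarith [hf u]

variable (v w c) in
theorem support_transfer_subset (f : V → ℝ) :
    Function.support (transfer v w c f) ⊆ insert v (insert w (Function.support f)) := by
  intro u hu
  by_contra hmem
  simp only [mem_insert_iff, not_or, Function.mem_support, not_not] at hmem
  obtain ⟨huv, huw, hfu⟩ := hmem
  exact hu (by simp [transfer, huv, huw, hfu])

theorem finsum_transfer (hfin : (Function.support f).Finite) :
    ∑ᶠ u, transfer v w c f u = ∑ᶠ u, f u := by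
  have hsingle (a : V) : (Function.support (Pi.single a c : V → ℝ)).Finite :=
    (finite_singleton a).subset Pi.support_single_subset
  have hsum_single (a : V) : ∑ᶠ u, (Pi.single a c : V → ℝ) u = c :=
    (finsum_eq_single _ a fun u hu => by simp [hu]).trans (by simp)
  simp only [transfer, Pi.add_apply, Pi.sub_apply]
  rw [finsum_sub_distrib ((hfin.union (hsingle v)).subset (support_add _ _)) (hsingle w),
    finsum_add_distrib hfin (hsingle v), hsum_single, hsum_single, add_sub_cancel_right]

theorem transfer_mem_indRealizationIn (h : G.neighborSet v ⊆ G.neighborSet w) (hv : v ∈ S)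
    (hf : f ∈ indRealizationIn G S) (hc₀ : 0 ≤ c) (hc : c ≤ f w) :
    transfer v w c f ∈ indRealizationIn G S := by
  rcases hc₀.eq_or_lt with rfl | hc₀
  · rwa [transfer_zero]
  obtain ⟨hpos, hfin, hS, hind, hsum⟩ := hf
  have hw : w ∈ Function.support f := (hc₀.trans_le hc).ne'
  have hsupp : Function.support (transfer v w c f) ⊆ insert v (Function.support f) := by
    simpa [insert_eq_of_mem hw] using support_transfer_subset v w c f
  exact ⟨transfer_nonneg hpos hc₀.le hc, (hfin.insert v).subset hsupp,
    hsupp.trans (insert_subset hv hS),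
    (isIndepSet_insert_of_neighborSet_subset h hind hw).mono hsupp,
    (finsum_transfer hfin).trans hsum⟩

theorem segment_transfer_subset (h : G.neighborSet v ⊆ G.neighborSet w) (hv : v ∈ S)
    (hf : f ∈ indRealizationIn G S) (hc₀ : 0 ≤ c) (hc : c ≤ f w) :
    segment ℝ f (transfer v w c f) ⊆ indRealizationIn G S := by
  rw [segment_eq_image']
  rintro _ ⟨θ, ⟨hθ₀, hθ₁⟩, rfl⟩
  have hθc : θ * c ≤ c := mul_le_of_le_one_left hc₀ hθ₁
  convert transfer_mem_indRealizationIn h hv hf (mul_nonneg hθ₀ hc₀) (hθc.trans hc) using 1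
  ext u
  simp only [transfer, Pi.add_apply, Pi.sub_apply, Pi.smul_apply, Pi.single_apply, smul_eq_mul]
  split_ifs <;> ring

variable (v w) in
def fold (f : V → ℝ) : V → ℝ :=
  transfer v w (f w) f

theorem fold_eq_self (hfw : f w = 0) : fold v w f = f := by
  rw [fold, hfw, transfer_zero]

theorem fold_apply_right (hvw : v ≠ w) : fold v w f w = 0 := by
  simp [fold, transfer, hvw]

variable (v w) in
theorem continuous_fold : Continuous (fold (V := V) v w) := by
  have hsingle (a : V) : Continuous fun f : V → ℝ => (Pi.single a (f w) : V → ℝ) :=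
    (continuous_single a).comp (continuous_apply w)
  exact (continuous_id.add (hsingle v)).sub (hsingle w)

theorem fold_mem_indRealizationIn_compl (hvw : v ≠ w) (h : G.neighborSet v ⊆ G.neighborSet w)
    (hf : f ∈ indRealization G) : fold v w f ∈ indRealizationIn G {w}ᶜ := by
  obtain ⟨hpos, hfin, -, hind, hsum⟩ :=
    transfer_mem_indRealizationIn h (mem_univ v) hf (hf.1 w) le_rfl
  refine ⟨hpos, hfin, fun u hu => mem_compl_singleton_iff.mpr fun huw => hu ?_, hind, hsum⟩
  rw [huw, fold_apply_right hvw]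

def foldRetraction (hvw : v ≠ w) (h : G.neighborSet v ⊆ G.neighborSet w) :
    C(indRealization G, indRealizationIn G {w}ᶜ) where
  toFun f := ⟨fold v w f, fold_mem_indRealizationIn_compl hvw h f.2⟩
  continuous_toFun := ((continuous_fold v w).comp continuous_subtype_val).subtype_mk _

end Fold

/-- fold lemma: if `v ≠ w` and `N(v) ⊆ N(w)` then
`Ind G ≃ Ind (G \ {w})`. -/
theorem fold_lemma {V : Type*} (G : SimpleGraph V) (v w : V) (hvw : v ≠ w)
    (h : G.neighborSet v ⊆ G.neighborSet w) :
    Nonempty (ContinuousMap.HomotopyEquiv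
      (↥(indRealization G)) (↥(indRealizationIn G ({w}ᶜ : Set V)))) := by
  classical
  refine ⟨.ofSegmentRetraction (indRealizationIn_mono (subset_univ _)) (foldRetraction hvw h)
    (fun f => ?_) (fun f => ?_)⟩
  · exact fold_eq_self (apply_eq_zero_of_mem_indRealizationIn f.2 (notMem_compl_iff.mpr rfl))
  · exact segment_transfer_subset h (mem_univ v) f.2 (f.2.1 w) le_rfl
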